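/- Let Q̄ be an imprecise probability tree, let E be a global upper expectation satisfying axioms P1–P5 together with P3=, P6 and P7, and let E' be any global upper expectation satisfying P1–P5. Then E(f|s) ≥ E'(f|s) for every global variable f ∈ V̄ and every situation s ∈ 𝒳*. -/

import Mathlib

open Filter MeasureTheory
open scoped Classical ENNReal NNReal

namespace UEP

variable {X : Type*}

/-- The string of the first `n` states of a path `ω`. -/
def pref (ω : ℕ → X) (n : ℕ) : List X := List.ofFn (fun i : Fin n => ω i)

/-- The cylinder event of a situation `s`. -/
def cyl (s : List X) : Set (ℕ → X) := {ω : ℕ → X | pref ω s.length = s}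

/-- `f` depends only on the first `n` states. -/
def NMeas (n : ℕ) (f : (ℕ → X) → EReal) : Prop :=
  ∀ ω₁ ω₂ : ℕ → X, pref ω₁ n = pref ω₂ n → f ω₁ = f ω₂

/-- `f` is bounded below (by a real constant). -/
def IsBddBelow (f : (ℕ → X) → EReal) : Prop := ∃ c : ℝ, ∀ ω, (c : EReal) ≤ f ω

/-- `f` is bounded above (by a real constant). -/
def IsBddAbove (f : (ℕ → X) → EReal) : Prop := ∃ c : ℝ, ∀ ω, f ω ≤ (c : EReal)

/-- `f` is real-valued and bounded. -/
def IsGambleVal (f : (ℕ → X) → EReal) : Prop :=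
  ∃ a b : ℝ, ∀ ω, (a : EReal) ≤ f ω ∧ f ω ≤ (b : EReal)

/-- `f` is an `n`-measurable gamble. -/
def IsNGamble (n : ℕ) (f : (ℕ → X) → EReal) : Prop := NMeas n f ∧ IsGambleVal f

/-- `f` is a finitary gamble. -/
def IsFinitaryGamble (f : (ℕ → X) → EReal) : Prop := (∃ n, NMeas n f) ∧ IsGambleVal f

/-- `f` is finitary. -/
def IsFinitary (f : (ℕ → X) → EReal) : Prop := ∃ n, NMeas n f

/-- pointwise convergence of a sequence of global variables. -/
def PtwLim (fs : ℕ → (ℕ → X) → EReal) (f : (ℕ → X) → EReal) : Prop :=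
  ∀ ω, Tendsto (fun n => fs n ω) atTop (nhds (f ω))

/-- the sequence is uniformly bounded below. -/
def UnifBddBelow (fs : ℕ → (ℕ → X) → EReal) : Prop :=
  ∃ c : ℝ, ∀ n ω, (c : EReal) ≤ fs n ω

/-- `f` belongs to `V̄_{b,lim}`: bounded below and a pointwise limit of finitary gambles. -/
def Vblim (f : (ℕ → X) → EReal) : Prop :=
  IsBddBelow f ∧ ∃ fs : ℕ → (ℕ → X) → EReal,
    (∀ n, IsFinitaryGamble (fs n)) ∧ PtwLim fs f

/-- A coherent upper expectation on the finite state space `X`. -/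
def IsCoherent [Fintype X] (Q : (X → ℝ) → ℝ) : Prop :=
  (∀ f : X → ℝ, Q f ≤ ⨆ x, f x) ∧
  (∀ f g : X → ℝ, Q (fun x => f x + g x) ≤ Q f + Q g) ∧
  (∀ l : ℝ, 0 ≤ l → ∀ f : X → ℝ, Q (fun x => l * f x) = l * Q f)

/-- Axiom P1: compatibility with the local models. -/
def P1 (Q : List X → (X → ℝ) → ℝ) (E : ((ℕ → X) → EReal) → List X → EReal) : Prop :=
  ∀ (s : List X) (f : X → ℝ),
    E (fun ω => (f (ω s.length) : EReal)) s = ((Q s f : ℝ) : EReal)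

/-- Axiom P2. -/
def P2 (E : ((ℕ → X) → EReal) → List X → EReal) : Prop :=
  ∀ f : (ℕ → X) → EReal, IsFinitaryGamble f → ∀ s : List X,
    E f s = E (fun ω => if ω ∈ cyl s then f ω else 0) s

/-- Axiom P3 (inequality form). -/
def P3le (E : ((ℕ → X) → EReal) → List X → EReal) : Prop :=
  ∀ f : (ℕ → X) → EReal, IsFinitaryGamble f → ∀ (n : ℕ) (ω : ℕ → X),
    E f (pref ω n) ≤ E (fun ω' => E f (pref ω' (n + 1))) (pref ω n)

/-- Axiom P3 with equality: the law of iterated upper expectations. -/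
def P3eq (E : ((ℕ → X) → EReal) → List X → EReal) : Prop :=
  ∀ f : (ℕ → X) → EReal, IsFinitaryGamble f → ∀ (n : ℕ) (ω : ℕ → X),
    E f (pref ω n) = E (fun ω' => E f (pref ω' (n + 1))) (pref ω n)

/-- Axiom P4: monotonicity. -/
def P4 (E : ((ℕ → X) → EReal) → List X → EReal) : Prop :=
  ∀ f g : (ℕ → X) → EReal, (∀ ω, f ω ≤ g ω) → ∀ s : List X, E f s ≤ E g s

/-- Axiom P5. -/
def P5 (E : ((ℕ → X) → EReal) → List X → EReal) : Prop :=
  ∀ (s : List X) (f : (ℕ → X) → EReal) (fs : ℕ → (ℕ → X) → EReal),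
    (∀ n, IsFinitaryGamble (fs n)) → UnifBddBelow fs → PtwLim fs f →
    E f s ≤ limsup (fun n => E (fs n) s) atTop

/-- Axiom P6. -/
def P6 (E : ((ℕ → X) → EReal) → List X → EReal) : Prop :=
  ∀ f : (ℕ → X) → EReal, Vblim f → ∀ s : List X,
    ∃ fs : ℕ → (ℕ → X) → EReal,
      (∀ n, IsNGamble n (fs n)) ∧ UnifBddBelow fs ∧ PtwLim fs f ∧
      limsup (fun n => E (fs n) s) atTop ≤ E f s

/-- Axiom P7. -/
def P7 (E : ((ℕ → X) → EReal) → List X → EReal) : Prop :=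
  ∀ (f : (ℕ → X) → EReal) (s : List X),
    E f s = sInf {y : EReal | ∃ g : (ℕ → X) → EReal,
      Vblim g ∧ (∀ ω, f ω ≤ g ω) ∧ y = E g s}

/-- bundled axioms P1–P5. -/
def P15 (Q : List X → (X → ℝ) → ℝ) (E : ((ℕ → X) → EReal) → List X → EReal) : Prop :=
  P1 Q E ∧ P2 E ∧ P3le E ∧ P4 E ∧ P5 E

/-- `Qe` extends `Q` from gambles to extended-real variables. -/
def ExtendsLocal [Fintype X] (Q : (X → ℝ) → ℝ) (Qe : (X → EReal) → EReal) : Prop :=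
  ∀ f : X → ℝ, Qe (fun x => (f x : EReal)) = ((Q f : ℝ) : EReal)

/-- continuity with respect to upper cuts. -/
def UpperCutCont (Qe : (X → EReal) → EReal) : Prop :=
  ∀ f : X → EReal, (∃ c : ℝ, ∀ x, (c : EReal) ≤ f x) →
    Tendsto (fun c : ℝ => Qe (fun x => min (f x) (c : EReal))) atTop (nhds (Qe f))

/-- continuity with respect to lower cuts. -/
def LowerCutCont (Qe : (X → EReal) → EReal) : Prop :=
  ∀ f : X → EReal,
    Tendsto (fun c : ℝ => Qe (fun x => max (f x) (c : EReal))) atBot (nhds (Qe f))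

/-- `Qe` is the extension of the imprecise probability tree `Q` satisfying
continuity with respect to upper and lower cuts. -/
def LocalExtension [Fintype X] (Q : List X → (X → ℝ) → ℝ)
    (Qe : List X → (X → EReal) → EReal) : Prop :=
  ∀ s : List X, ExtendsLocal (Q s) (Qe s) ∧ UpperCutCont (Qe s) ∧ LowerCutCont (Qe s)

/-- supermartingale with respect to the extended local models `Qe`. -/
def IsSupermart (Qe : List X → (X → EReal) → EReal) (M : List X → EReal) : Prop :=
  ∀ s : List X, Qe s (fun x => M (s ++ [x])) ≤ M s

/-- a bounded-below process. -/
def MBddBelow (M : List X → EReal) : Prop := ∃ c : ℝ, ∀ s : List X, (c : EReal) ≤ M s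

/-- the game-theoretic upper expectation (Shafer–Vovk). -/
noncomputable def EV (Qe : List X → (X → EReal) → EReal)
    (f : (ℕ → X) → EReal) (s : List X) : EReal :=
  sInf {y : EReal | ∃ M : List X → EReal, MBddBelow M ∧ IsSupermart Qe M ∧
    (∀ ω ∈ cyl s, f ω ≤ liminf (fun n => M (pref ω n)) atTop) ∧ y = M s}

/-- a canonical path passing through the situation `s`. -/
noncomputable def extPath [Nonempty X] (s : List X) : ℕ → X :=
  fun i => if h : i < s.length then s.get ⟨i, h⟩ else Classical.arbitrary X

/-- extended-real addition with the convention `(+∞) + (−∞) = (−∞) + (+∞) = +∞`. -/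
noncomputable def eadd (a b : EReal) : EReal := if a = ⊤ ∨ b = ⊤ then ⊤ else a + b

/-- extended-real finite sums with the conventions `0·(±∞) = 0` and
`(+∞) + (−∞) = +∞`. -/
noncomputable def esum {α : Type*} (s : Finset α) (f : α → EReal) : EReal :=
  if ∃ x ∈ s, f x = ⊤ then ⊤ else ∑ x ∈ s, f x

/-- the σ-algebra `ℱ` on paths generated by all cylinder events. -/
def cylSA (X : Type*) : MeasurableSpace (ℕ → X) :=
  MeasurableSpace.generateFrom {A : Set (ℕ → X) | ∃ s : List X, A = cyl s}

/-- a precise probability tree: a probability mass function in every situation. -/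
def IsTree [Fintype X] (p : List X → X → ℝ) : Prop :=
  ∀ s : List X, (∀ x, 0 ≤ p s x) ∧ ∑ x, p s x = 1

/-- the `i`-th entry (0-based) of a list, i.e. the `(i+1)`-th state. -/
noncomputable def nthL [Nonempty X] (z : List X) (i : ℕ) : X :=
  z.getD i (Classical.arbitrary X)

/-- `P` is the family of conditional probability measures on `ℱ` determined by
the precise probability tree `p` via the product formula on cylinder events. -/
def CylProp [Fintype X] [Nonempty X] (p : List X → X → ℝ)
    (P : List X → @Measure (ℕ → X) (cylSA X)) : Prop :=
  ∀ s z : List X,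
    P s (cyl z) =
      if s.length < z.length ∧ z.take s.length = s then
        ∏ i ∈ Finset.Ico s.length z.length, ENNReal.ofReal (p (z.take i) (nthL z i))
      else if z.length ≤ s.length ∧ s.take z.length = z then 1 else 0

/-- the nonnegative part of an extended real, as an `ℝ≥0∞`. -/
noncomputable def toENN (a : EReal) : ℝ≥0∞ := if a = ⊤ then ⊤ else ENNReal.ofReal a.toReal

/-- `∫ f⁺ dP`. -/
noncomputable def lpos (P : @Measure (ℕ → X) (cylSA X)) (f : (ℕ → X) → EReal) : ℝ≥0∞ :=
  @MeasureTheory.lintegral _ (cylSA X) P (fun ω => toENN (f ω))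

/-- `∫ f⁻ dP`. -/
noncomputable def lneg (P : @Measure (ℕ → X) (cylSA X)) (f : (ℕ → X) → EReal) : ℝ≥0∞ :=
  @MeasureTheory.lintegral _ (cylSA X) P (fun ω => toENN (-(f ω)))

/-- the Lebesgue integral `∫ f dP = ∫ f⁺ dP − ∫ f⁻ dP`. -/
noncomputable def emeas (P : @Measure (ℕ → X) (cylSA X)) (f : (ℕ → X) → EReal) : EReal :=
  (lpos P f : EReal) - (lneg P f : EReal)

/-- `ℱ`-measurability of a global variable. -/
def FMeasurable (f : (ℕ → X) → EReal) : Prop := @Measurable _ _ (cylSA X) _ f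

/-- the Lebesgue integral `∫ f dP` exists. -/
def EMeasExists (P : @Measure (ℕ → X) (cylSA X)) (f : (ℕ → X) → EReal) : Prop :=
  FMeasurable f ∧ min (lpos P f) (lneg P f) < ⊤

/-- the upper integral `Ē¹`. -/
noncomputable def upInt1 (P : @Measure (ℕ → X) (cylSA X)) (f : (ℕ → X) → EReal) : EReal :=
  sInf {y : EReal | ∃ g : (ℕ → X) → EReal,
    FMeasurable g ∧ IsBddBelow g ∧ (∀ ω, f ω ≤ g ω) ∧ y = emeas P g}

/-- the upper integral `Ē²`. -/
noncomputable def upInt2 (P : @Measure (ℕ → X) (cylSA X)) (f : (ℕ → X) → EReal) : EReal :=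
  sInf {y : EReal | ∃ g : (ℕ → X) → EReal,
    EMeasExists P g ∧ (∀ ω, f ω ≤ g ω) ∧ y = emeas P g}

/-- the game-theoretic upper expectation with respect to a precise probability tree. -/
noncomputable def EVp [Fintype X] (p : List X → X → ℝ)
    (f : (ℕ → X) → EReal) (s : List X) : EReal :=
  sInf {y : EReal | ∃ M : List X → EReal, MBddBelow M ∧
    (∀ t : List X, ∑ x, ((p t x : ℝ) : EReal) * M (t ++ [x]) ≤ M t) ∧
    (∀ ω ∈ cyl s, f ω ≤ liminf (fun n => M (pref ω n)) atTop) ∧ y = M s}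

/-- the credal set of a coherent upper expectation. -/
def credal [Fintype X] (Q : (X → ℝ) → ℝ) : Set (X → ℝ) :=
  {q | (∀ x, 0 ≤ q x) ∧ (∑ x, q x = 1) ∧ ∀ f : X → ℝ, ∑ x, f x * q x ≤ Q f}

/-- a precise probability tree compatible with the imprecise probability tree `Q`. -/
def Compat [Fintype X] (Q : List X → (X → ℝ) → ℝ) (p : List X → X → ℝ) : Prop :=
  ∀ s : List X, p s ∈ credal (Q s)

/-- the global measure-theoretic upper expectation. -/
noncomputable def Emeas [Fintype X] (Q : List X → (X → ℝ) → ℝ)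
    (P : (List X → X → ℝ) → List X → @Measure (ℕ → X) (cylSA X))
    (f : (ℕ → X) → EReal) (s : List X) : EReal :=
  sSup {y : EReal | ∃ p : List X → X → ℝ, Compat Q p ∧ y = upInt1 (P p s) f}

/-! For an `m`-measurable gamble `f` the comparison `E' f s ≤ E f s` goes by backward induction
on the situation. Once `s` has length at least `m`, `f` is constant on the cylinder of `s`, and
P1, P2 and coherence force both expectations to equal that constant. One level up, P3 for `E'`,
monotonicity and the induction hypothesis give `E' f s ≤ E'(E(f | X_{1:|s|+1}) | s)`; the variable
inside depends only on the next state, so by P1–P2 both `E'` and `E` assign it the local value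
`Q_s(x ↦ E(f | s x))`, which is `E f s` by the law of iterated upper expectations P3= for `E`.
P6 and P5 carry the comparison to limits of such gambles, and P7 with P4 to every variable. -/

lemma pref_length (ω : ℕ → X) (n : ℕ) : (pref ω n).length = n := by
  simp [pref]

lemma pref_eq_pref_iff {ω₁ ω₂ : ℕ → X} {n : ℕ} :
    pref ω₁ n = pref ω₂ n ↔ ∀ i < n, ω₁ i = ω₂ i := by
  simp only [pref, List.ofFn_inj, funext_iff, Fin.forall_iff]

lemma pref_succ (ω : ℕ → X) (n : ℕ) : pref ω (n + 1) = pref ω n ++ [ω n] := by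
  rw [pref, List.ofFn_succ', List.concat_eq_append]
  rfl

lemma pref_extPath [Nonempty X] (s : List X) : pref (extPath s) s.length = s := by
  refine List.ext_getElem (pref_length _ _) fun i _ hi => ?_
  simp only [pref, List.getElem_ofFn, extPath, dif_pos hi, List.get_eq_getElem]

lemma NMeas.eqOn_cyl [Nonempty X] {m : ℕ} {f : (ℕ → X) → EReal} (hf : NMeas m f)
    {s : List X} (hs : m ≤ s.length) : Set.EqOn f (fun _ => f (extPath s)) (cyl s) := by
  intro ω (hω : pref ω s.length = s)
  have hω' := pref_eq_pref_iff.1 (hω.trans (pref_extPath s).symm)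
  exact hf _ _ (pref_eq_pref_iff.2 fun i hi => hω' i (hi.trans_le hs))

lemma coe_toReal_of_le_of_le {x : EReal} {a b : ℝ} (ha : (a : EReal) ≤ x)
    (hb : x ≤ (b : EReal)) : ((x.toReal : ℝ) : EReal) = x :=
  EReal.coe_toReal (hb.trans_lt (EReal.coe_lt_top b)).ne
    ((EReal.bot_lt_coe a).trans_le ha).ne'

lemma IsCoherent.apply_const [Fintype X] [Nonempty X] {Q : (X → ℝ) → ℝ}
    (hQ : IsCoherent Q) (c : ℝ) : Q (fun _ => c) = c := by
  obtain ⟨hsup, hsub, hhom⟩ := hQ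
  have hle : Q (fun _ => c) ≤ c := (hsup _).trans_eq ciSup_const
  have hle_neg : Q (fun _ => -c) ≤ -c := (hsup _).trans_eq ciSup_const
  have hzero : Q (fun _ => 0) = 0 := by simpa using hhom 0 le_rfl fun _ => 0
  have hadd := hsub (fun _ => c) (fun _ => -c)
  simp only [add_neg_cancel, hzero] at hadd
  linarith

lemma isFinitaryGamble_const (c : ℝ) : IsFinitaryGamble (fun _ : ℕ → X => (c : EReal)) :=
  ⟨⟨0, fun _ _ _ => rfl⟩, c, c, fun _ => ⟨le_rfl, le_rfl⟩⟩

lemma isFinitaryGamble_next [Finite X] (h : X → ℝ) (n : ℕ) :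
    IsFinitaryGamble (fun ω : ℕ → X => (h (ω n) : EReal)) := by
  refine ⟨⟨n + 1, fun ω₁ ω₂ hω => ?_⟩, ?_⟩
  · simp only [pref_eq_pref_iff.1 hω n n.lt_succ_self]
  · obtain ⟨a, ha⟩ := Finite.exists_le fun x => -h x
    obtain ⟨b, hb⟩ := Finite.exists_le h
    exact ⟨-a, b, fun ω => ⟨EReal.coe_le_coe_iff.2 (neg_le.1 (ha _)),
      EReal.coe_le_coe_iff.2 (hb _)⟩⟩

lemma P2.eq_of_eqOn_cyl {E : ((ℕ → X) → EReal) → List X → EReal} (h2 : P2 E)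
    {f g : (ℕ → X) → EReal} (hf : IsFinitaryGamble f) (hg : IsFinitaryGamble g)
    {s : List X} (hfg : Set.EqOn f g (cyl s)) : E f s = E g s := by
  rw [h2 f hf, h2 g hg]
  congr 1
  funext ω
  split_ifs with hω
  exacts [hfg hω, rfl]

lemma P1.apply_const [Fintype X] [Nonempty X] {Q : List X → (X → ℝ) → ℝ}
    {E : ((ℕ → X) → EReal) → List X → EReal} (h1 : P1 Q E) (hQ : ∀ s, IsCoherent (Q s))
    (c : ℝ) (s : List X) : E (fun _ => (c : EReal)) s = c := by
  simpa only [(hQ s).apply_const] using h1 s fun _ => c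

lemma apply_mem_Icc [Fintype X] [Nonempty X] {Q : List X → (X → ℝ) → ℝ}
    {E : ((ℕ → X) → EReal) → List X → EReal} (h1 : P1 Q E) (h4 : P4 E)
    (hQ : ∀ s, IsCoherent (Q s)) {f : (ℕ → X) → EReal} {a b : ℝ}
    (hf : ∀ ω, f ω ∈ Set.Icc (a : EReal) b) (s : List X) : E f s ∈ Set.Icc (a : EReal) b :=
  ⟨(h1.apply_const hQ a s).symm.trans_le (h4 _ _ (fun ω => (hf ω).1) s),
    (h4 _ _ (fun ω => (hf ω).2) s).trans_eq (h1.apply_const hQ b s)⟩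

lemma apply_eq_of_nMeas_le_length [Fintype X] [Nonempty X] {Q : List X → (X → ℝ) → ℝ}
    {E : ((ℕ → X) → EReal) → List X → EReal} (h1 : P1 Q E) (h2 : P2 E)
    (hQ : ∀ s, IsCoherent (Q s)) {m : ℕ} {f : (ℕ → X) → EReal} (hm : NMeas m f)
    (hf : IsGambleVal f) {s : List X} (hs : m ≤ s.length) : E f s = f (extPath s) := by
  obtain ⟨a, b, hab⟩ := hf
  have hval := coe_toReal_of_le_of_le (hab (extPath s)).1 (hab (extPath s)).2
  have hconst : Set.EqOn f (fun _ => ((f (extPath s)).toReal : EReal)) (cyl s) :=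
    fun ω hω => (hm.eqOn_cyl hs hω).trans hval.symm
  rw [h2.eq_of_eqOn_cyl ⟨⟨m, hm⟩, a, b, hab⟩ (isFinitaryGamble_const _) hconst,
    h1.apply_const hQ, hval]

/-- The global variable `E(f | X_{1:n})`. -/
def condVar (E : ((ℕ → X) → EReal) → List X → EReal) (f : (ℕ → X) → EReal) (n : ℕ) :
    (ℕ → X) → EReal :=
  fun ω => E f (pref ω n)

lemma nMeas_condVar (E : ((ℕ → X) → EReal) → List X → EReal) (f : (ℕ → X) → EReal) (n : ℕ) :
    NMeas n (condVar E f n) :=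
  fun _ _ hω => congrArg (E f) hω

lemma P3le.apply_le_condVar [Nonempty X] {E : ((ℕ → X) → EReal) → List X → EReal}
    (h3 : P3le E) {f : (ℕ → X) → EReal} (hf : IsFinitaryGamble f) (s : List X) :
    E f s ≤ E (condVar E f (s.length + 1)) s := by
  have := h3 f hf s.length (extPath s)
  rwa [pref_extPath] at this

lemma P3eq.apply_eq_condVar [Nonempty X] {E : ((ℕ → X) → EReal) → List X → EReal}
    (h3 : P3eq E) {f : (ℕ → X) → EReal} (hf : IsFinitaryGamble f) (s : List X) :
    E f s = E (condVar E f (s.length + 1)) s := by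
  have := h3 f hf s.length (extPath s)
  rwa [pref_extPath] at this

lemma apply_condVar_succ [Fintype X] {Q : List X → (X → ℝ) → ℝ}
    {E E₁ : ((ℕ → X) → EReal) → List X → EReal} (h1 : P1 Q E₁) (h2 : P2 E₁)
    {f : (ℕ → X) → EReal} {a b : ℝ} (hE : ∀ t, E f t ∈ Set.Icc (a : EReal) b) (s : List X) :
    E₁ (condVar E f (s.length + 1)) s = Q s (fun x => (E f (s ++ [x])).toReal) := by
  have hg : IsFinitaryGamble (condVar E f (s.length + 1)) :=
    ⟨⟨_, nMeas_condVar E f _⟩, a, b, fun ω => hE _⟩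
  rw [h2.eq_of_eqOn_cyl hg (isFinitaryGamble_next _ s.length), h1]
  intro ω (hω : pref ω s.length = s)
  simp only [condVar, pref_succ, hω]
  exact (coe_toReal_of_le_of_le (hE _).1 (hE _).2).symm

theorem le_of_nMeas_of_isGambleVal [Fintype X] [Nonempty X] {Q : List X → (X → ℝ) → ℝ}
    (hQ : ∀ s, IsCoherent (Q s)) {E E' : ((ℕ → X) → EReal) → List X → EReal}
    (h1 : P1 Q E) (h2 : P2 E) (h4 : P4 E) (hiter : P3eq E) (hE' : P15 Q E')
    {m : ℕ} {f : (ℕ → X) → EReal} (hm : NMeas m f) (hf : IsGambleVal f) (s : List X) :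
    E' f s ≤ E f s := by
  obtain ⟨h1', h2', h3', h4', -⟩ := hE'
  obtain ⟨a, b, hab⟩ := hf
  have hfin : IsFinitaryGamble f := ⟨⟨m, hm⟩, a, b, hab⟩
  have hE : ∀ t, E f t ∈ Set.Icc (a : EReal) b := apply_mem_Icc h1 h4 hQ hab
  suffices ∀ d (s : List X), m ≤ s.length + d → E' f s ≤ E f s from this m s (by omega)
  intro d
  induction d with
  | zero =>
    intro s hs
    rw [apply_eq_of_nMeas_le_length h1 h2 hQ hm ⟨a, b, hab⟩ hs,
      apply_eq_of_nMeas_le_length h1' h2' hQ hm ⟨a, b, hab⟩ hs]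
  | succ d ih =>
    intro s hs
    have hnext : ∀ ω, condVar E' f (s.length + 1) ω ≤ condVar E f (s.length + 1) ω :=
      fun ω => ih _ (by rw [pref_length]; omega)
    calc E' f s ≤ E' (condVar E' f (s.length + 1)) s := h3'.apply_le_condVar hfin s
      _ ≤ E' (condVar E f (s.length + 1)) s := h4' _ _ hnext s
      _ = E (condVar E f (s.length + 1)) s := by
        rw [apply_condVar_succ h1' h2' hE, apply_condVar_succ h1 h2 hE]
      _ = E f s := (hiter.apply_eq_condVar hfin s).symm

theorem le_of_vblim [Fintype X] [Nonempty X] {Q : List X → (X → ℝ) → ℝ}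
    (hQ : ∀ s, IsCoherent (Q s)) {E E' : ((ℕ → X) → EReal) → List X → EReal}
    (h1 : P1 Q E) (h2 : P2 E) (h4 : P4 E) (hiter : P3eq E) (h6 : P6 E) (hE' : P15 Q E')
    {g : (ℕ → X) → EReal} (hg : Vblim g) (s : List X) : E' g s ≤ E g s := by
  obtain ⟨fs, hfs, hbdd, hlim, hlimsup⟩ := h6 g hg s
  calc E' g s ≤ limsup (fun n => E' (fs n) s) atTop :=
        hE'.2.2.2.2 s g fs (fun n => ⟨⟨n, (hfs n).1⟩, (hfs n).2⟩) hbdd hlim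
    _ ≤ limsup (fun n => E (fs n) s) atTop := limsup_le_limsup <| .of_forall fun n =>
        le_of_nMeas_of_isGambleVal hQ h1 h2 h4 hiter hE' (hfs n).1 (hfs n).2 s
    _ ≤ E g s := hlimsup

theorem stmt3 {X : Type*} [Fintype X] [Nonempty X]
    (Q : List X → (X → ℝ) → ℝ) (hQ : ∀ s, IsCoherent (Q s))
    (E E' : ((ℕ → X) → EReal) → List X → EReal)
    (hE : P15 Q E) (hEiter : P3eq E) (hE6 : P6 E) (hE7 : P7 E)
    (hE' : P15 Q E')
    (f : (ℕ → X) → EReal) (s : List X) :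
    E' f s ≤ E f s := by
  obtain ⟨h1, h2, -, h4, -⟩ := hE
  rw [hE7 f s]
  refine le_sInf ?_
  rintro _ ⟨g, hg, hfg, rfl⟩
  exact (hE'.2.2.2.1 f g hfg s).trans (le_of_vblim hQ h1 h2 h4 hEiter hE6 hE' hg s)

end UEP
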